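/- For every hyperplane H ∈ 𝔓, the intersection H ∩ U° is nonempty. -/

import Mathlib

/-!
Write `H = H_α` with `α = w·α_i`. The point `f` with `f_i = 0` and `f_j = 1` for `j ≠ i` lies
on the wall `H_{α_i}` of `C̄`, and a whole neighbourhood of it is covered by `C̄ ∪ s_i C̄`: a
point with small `i`-th coordinate and large other coordinates lies in `C̄` if its `i`-th
coordinate is `≥ 0`, and in `s_i C` otherwise, since `|B(α_i, α_j)| ≤ 1`. Hence `f ∈ U°`, and
`w·f ∈ H_α ∩ U°` because `U°` is `W`-stable.
-/

noncomputable section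

namespace PaperBound

variable {B : Type} {W : Type} [Group W]

/-- The value `B(α_i, α_j)` of the canonical symmetric bilinear form on simple roots:
`-cos (π / m i j)` if `m i j ≠ ∞` (encoded as `M i j ≠ 0`) and `-1` otherwise. -/
def cB (M : CoxeterMatrix B) (i j : B) : ℝ :=
  if M i j = 0 then -1 else - Real.cos (Real.pi / (M i j : ℝ))

/-- The canonical symmetric bilinear form on `V = B → ℝ` (coordinates in the basis of
simple roots `Δ = {α_i}`). -/
def bform [Fintype B] (M : CoxeterMatrix B) (u v : B → ℝ) : ℝ :=
  ∑ i, ∑ j, u i * v j * cB M i j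

/-- The natural pairing `⟨-,-⟩ : V* × V → ℝ`, where both `V` and `V*` are modelled as
`B → ℝ` (coordinates of `V*` taken in the dual basis of `Δ`). -/
def pair [Fintype B] (f v : B → ℝ) : ℝ := ∑ i, f i * v i

/-- The simple root `α_i ∈ V`. -/
def sroot [DecidableEq B] (i : B) : B → ℝ := Pi.single i 1

/-- `ρ` is the geometric representation of `W` on `V = B → ℝ`:
`s_i · v = v - 2 B(α_i, v) α_i`. -/
def IsGeomRep [Fintype B] [DecidableEq B] (M : CoxeterMatrix B) (cs : CoxeterSystem M W)
    (ρ : W →* (B → ℝ) ≃ₗ[ℝ] (B → ℝ)) : Prop :=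
  ∀ (i : B) (v : B → ℝ), ρ (cs.simple i) v = v - (2 * bform M (sroot i) v) • sroot i

/-- `π` is the contragredient representation of `W` on `V* = B → ℝ`:
`⟨w·f, w·v⟩ = ⟨f, v⟩`. -/
def IsContraRep [Fintype B] (ρ : W →* (B → ℝ) ≃ₗ[ℝ] (B → ℝ))
    (π : W →* (B → ℝ) ≃ₗ[ℝ] (B → ℝ)) : Prop :=
  ∀ (w : W) (f v : B → ℝ), pair (π w f) (ρ w v) = pair f v

/-- The set `Φ⁺` of positive roots: roots (elements of the orbit of the simple roots)
all of whose coordinates in the basis `Δ` are nonnegative. -/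
def PhiPos [Fintype B] [DecidableEq B] (ρ : W →* (B → ℝ) ≃ₗ[ℝ] (B → ℝ)) : Set (B → ℝ) :=
  {α | (∃ (w : W) (i : B), α = ρ w (sroot i)) ∧ ∀ j, 0 ≤ α j}

/-- The hyperplane `H_α = {f ∈ V* : ⟨f, α⟩ = 0}`. -/
def hyp [Fintype B] (α : B → ℝ) : Set (B → ℝ) := {f | pair f α = 0}

/-- The set `𝔓 = {H_α : α ∈ Φ⁺}` of hyperplanes. -/
def Planes [Fintype B] [DecidableEq B] (ρ : W →* (B → ℝ) ≃ₗ[ℝ] (B → ℝ)) :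
    Set (Set (B → ℝ)) :=
  {H | ∃ α ∈ PhiPos (W := W) ρ, H = hyp α}

/-- The (open) dominant chamber `C = {f ∈ V* : ⟨f, α_i⟩ > 0 for all i}`. -/
def domCham (B : Type) [Fintype B] [DecidableEq B] : Set (B → ℝ) :=
  {f | ∀ i : B, 0 < pair f (sroot i)}

/-- The Tits cone `U = ⋃_{w ∈ W} w · (closure of C)`. -/
def titsCone [Fintype B] [DecidableEq B] (π : W →* (B → ℝ) ≃ₗ[ℝ] (B → ℝ)) :
    Set (B → ℝ) :=
  ⋃ w : W, (π w) '' closure (domCham B)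

/-- `A ⩀ B := A ∩ B ∩ U°`, where `U°` is the interior of the Tits cone. -/
def dcap [Fintype B] [DecidableEq B] (π : W →* (B → ℝ) ≃ₗ[ℝ] (B → ℝ))
    (A A' : Set (B → ℝ)) : Set (B → ℝ) :=
  A ∩ A' ∩ interior (titsCone π)

/-- A set `𝔔` of hyperplanes is intersecting if `H₁ ⩀ H₂ ≠ ∅` for all `H₁, H₂ ∈ 𝔔`. -/
def Intersecting [Fintype B] [DecidableEq B] (π : W →* (B → ℝ) ≃ₗ[ℝ] (B → ℝ))
    (Q : Set (Set (B → ℝ))) : Prop :=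
  ∀ H₁ ∈ Q, ∀ H₂ ∈ Q, (dcap π H₁ H₂).Nonempty

/-- The chamber `wC ⊆ V*`. -/
def cham [Fintype B] [DecidableEq B] (π : W →* (B → ℝ) ≃ₗ[ℝ] (B → ℝ)) (w : W) :
    Set (B → ℝ) :=
  (π w) '' domCham B

/-- The hyperplane with root `α` separates `f, g ∈ V*`: `⟨f, α⟩⟨g, α⟩ < 0`. -/
def SepPt [Fintype B] (α f g : B → ℝ) : Prop := pair f α * pair g α < 0

/-- The hyperplane with root `α` separates the subsets `A, A'` of `V*`: every point of
`A ∪ A'` lies off the hyperplane, and every point of `A` is separated from every point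
of `A'`. -/
def SepSets [Fintype B] (α : B → ℝ) (A A' : Set (B → ℝ)) : Prop :=
  (∀ f ∈ A ∪ A', pair f α ≠ 0) ∧ ∀ f ∈ A, ∀ g ∈ A', SepPt α f g

/-- The subset `A ⊆ V*` lies entirely on one side of the hyperplane with root `α`. -/
def OneSide [Fintype B] (α : B → ℝ) (A : Set (B → ℝ)) : Prop :=
  (∀ f ∈ A, pair f α ≠ 0) ∧ ∀ f ∈ A, ∀ g ∈ A, ¬ SepPt α f g

/-- The hyperplane `H ∈ 𝔓` separates the subsets `A, A'` of `V*` (expressed via a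
positive root `α` with `H = H_α`; this does not depend on the choice of `α`). -/
def SepSetsH [Fintype B] [DecidableEq B] (ρ : W →* (B → ℝ) ≃ₗ[ℝ] (B → ℝ))
    (H : Set (B → ℝ)) (A A' : Set (B → ℝ)) : Prop :=
  ∃ α ∈ PhiPos (W := W) ρ, H = hyp α ∧ SepSets α A A'


/-- The open half-space bounded by the hyperplane with root `α` on the side not containing
the chamber `wC`. -/
def halfNeg [Fintype B] [DecidableEq B] (π : W →* (B → ℝ) ≃ₗ[ℝ] (B → ℝ)) (w : W)
    (α : B → ℝ) : Set (B → ℝ) :=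
  {f | ∀ f₀ ∈ cham π w, pair f α * pair f₀ α < 0}

/-- Auxiliary recursion producing the sets `𝔄_i` (first component) together with the
cumulative unions `𝔄₀ ∪ ⋯ ∪ 𝔄_i` (second component), starting from `𝔄₀ = A0`:
`𝔄_{i+1} = {P ∈ Q ∖ (𝔄₀ ∪ ⋯ ∪ 𝔄_i) : P ⩀ σ(R) = ∅ for some R ∈ 𝔄_i}`. -/
def AseqAux [Fintype B] [DecidableEq B] (π : W →* (B → ℝ) ≃ₗ[ℝ] (B → ℝ))
    (Q : Set (Set (B → ℝ))) (σ : W) (A0 : Set (Set (B → ℝ))) :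
    ℕ → Set (Set (B → ℝ)) × Set (Set (B → ℝ))
  | 0 => (A0, A0)
  | i + 1 =>
    let prev := AseqAux π Q σ A0 i
    ({P | P ∈ Q ∧ P ∉ prev.2 ∧ ∃ R ∈ prev.1, dcap π P ((π σ) '' R) = ∅},
      prev.2 ∪ {P | P ∈ Q ∧ P ∉ prev.2 ∧ ∃ R ∈ prev.1, dcap π P ((π σ) '' R) = ∅})

/-- The set `𝔄_i`. -/
def Aseq [Fintype B] [DecidableEq B] (π : W →* (B → ℝ) ≃ₗ[ℝ] (B → ℝ))
    (Q : Set (Set (B → ℝ))) (σ : W) (A0 : Set (Set (B → ℝ))) (i : ℕ) :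
    Set (Set (B → ℝ)) :=
  (AseqAux π Q σ A0 i).1

section Words

variable {M : CoxeterMatrix B}

/-- The element `x′_n = x s₁ ⋯ ŝ_{i₁} ⋯ ŝ_{i_{n−1}} ⋯ s_{i_n − 1}`: the product of `x` and
the first `i_n - 1` letters of the word `ω`, with the letters at positions `i₁, …, i_{n−1}`
omitted. (Positions are recorded `0`-based: the index `ι n : Fin ω.length` corresponds to
the letter `s_{i_{n+1}}` of the paper.) -/
def omitProd (cs : CoxeterSystem M W) (x : W) (ω : List B) {p : ℕ}
    (ι : Fin p → Fin ω.length) (n : Fin p) : W :=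
  x * cs.wordProd (((List.finRange ω.length).filter
      (fun j : Fin ω.length => decide ((j : ℕ) < (ι n : ℕ) ∧ ∀ m : Fin p, m < n → j ≠ ι m))).map ω.get)

/-- The condition `ℓ(x′_n s_{i_n}) < ℓ(x′_n)` for all `n = 1, …, p`. -/
def DescCond (cs : CoxeterSystem M W) (x : W) (ω : List B) {p : ℕ}
    (ι : Fin p → Fin ω.length) : Prop :=
  ∀ n : Fin p, cs.length (omitProd cs x ω ι n * cs.simple (ω.get (ι n))) <
    cs.length (omitProd cs x ω ι n)

/-- The element `x_n := x s₁ ⋯ s_{i_n − 1}`. -/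
def xseq (cs : CoxeterSystem M W) (x : W) (ω : List B) {p : ℕ}
    (ι : Fin p → Fin ω.length) (n : Fin p) : W :=
  x * cs.wordProd (ω.take (ι n))

/-- The reflection `σ_n := x_n s_{i_n} x_n⁻¹`. -/
def sigmaseq (cs : CoxeterSystem M W) (x : W) (ω : List B) {p : ℕ}
    (ι : Fin p → Fin ω.length) (n : Fin p) : W :=
  xseq cs x ω ι n * cs.simple (ω.get (ι n)) * (xseq cs x ω ι n)⁻¹

/-- The element `e_n := σ_n σ_{n−1} ⋯ σ₁`, with `e₀ = e`. -/
def eseq (cs : CoxeterSystem M W) (x : W) (ω : List B) {p : ℕ}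
    (ι : Fin p → Fin ω.length) : ℕ → W
  | 0 => 1
  | n + 1 => (if h : n < p then sigmaseq cs x ω ι ⟨n, h⟩ else 1) * eseq cs x ω ι n

/-- A root of the hyperplane `H_n` corresponding to the reflection `σ_n`, namely
`x_n · α_{s_{i_n}}`. -/
def rootseq [Fintype B] [DecidableEq B] (cs : CoxeterSystem M W)
    (ρ : W →* (B → ℝ) ≃ₗ[ℝ] (B → ℝ)) (x : W) (ω : List B) {p : ℕ}
    (ι : Fin p → Fin ω.length) (n : Fin p) : B → ℝ :=
  ρ (xseq cs x ω ι n) (sroot (ω.get (ι n)))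

/-- The hyperplane `H_n ∈ 𝔓` corresponding to the reflection `σ_n`. -/
def Hseq [Fintype B] [DecidableEq B] (cs : CoxeterSystem M W)
    (ρ : W →* (B → ℝ) ≃ₗ[ℝ] (B → ℝ)) (x : W) (ω : List B) {p : ℕ}
    (ι : Fin p → Fin ω.length) (n : Fin p) : Set (B → ℝ) :=
  hyp (rootseq cs ρ x ω ι n)

end Words

open scoped Topology

section TitsCone

variable [Fintype B] [DecidableEq B]

lemma pair_sroot (f : B → ℝ) (j : B) : pair f (sroot j) = f j := by
  simp [pair, sroot, Pi.single_apply]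

lemma bform_sroot_sroot (M : CoxeterMatrix B) (i j : B) :
    bform M (sroot i) (sroot j) = cB M i j := by
  simp [bform, sroot, Pi.single_apply, ite_mul]

omit [DecidableEq B] in
lemma pair_sub_smul (f u v : B → ℝ) (c : ℝ) :
    pair f (u - c • v) = pair f u - c * pair f v := by
  simp only [pair, Finset.mul_sum, ← Finset.sum_sub_distrib, Pi.sub_apply, Pi.smul_apply,
    smul_eq_mul]
  exact Finset.sum_congr rfl fun _ _ => by ring

omit [Fintype B] [DecidableEq B] in
lemma cB_self (M : CoxeterMatrix B) (i : B) : cB M i i = 1 := by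
  simp [cB, Real.cos_pi]

omit [Fintype B] [DecidableEq B] in
lemma abs_cB_le_one (M : CoxeterMatrix B) (i j : B) : |cB M i j| ≤ 1 := by
  unfold cB
  split_ifs
  · norm_num
  · rw [abs_neg]; exact Real.abs_cos_le_one _

lemma contra_simple_apply {M : CoxeterMatrix B} {cs : CoxeterSystem M W}
    {ρ π : W →* (B → ℝ) ≃ₗ[ℝ] (B → ℝ)} (hρ : IsGeomRep M cs ρ) (hπ : IsContraRep ρ π)
    (i j : B) (g : B → ℝ) :
    π (cs.simple i) g j = g j - 2 * cB M i j * g i := by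
  have hinv : ρ (cs.simple i) (ρ (cs.simple i) (sroot j)) = sroot j := by
    rw [← LinearEquiv.mul_apply, ← map_mul, cs.simple_mul_simple_self, map_one]; rfl
  have h := hπ (cs.simple i) g (ρ (cs.simple i) (sroot j))
  rwa [hinv, hρ i (sroot j), pair_sub_smul, bform_sroot_sroot, pair_sroot, pair_sroot,
    pair_sroot] at h

lemma mem_closure_domCham_of_nonneg {g : B → ℝ} (hg : ∀ j, 0 ≤ g j) :
    g ∈ closure (domCham B) := by
  have hlim : Filter.Tendsto (fun t : ℝ => g + t • (1 : B → ℝ)) (𝓝[>] 0) (𝓝 g) := by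
    have hcont : Continuous fun t : ℝ => g + t • (1 : B → ℝ) := by fun_prop
    simpa using (hcont.tendsto 0).mono_left nhdsWithin_le_nhds
  refine mem_closure_of_tendsto hlim ?_
  filter_upwards [self_mem_nhdsWithin] with t (ht : 0 < t) j
  simpa [pair_sroot] using add_pos_of_nonneg_of_pos (hg j) ht

lemma map_mem_titsCone (π : W →* (B → ℝ) ≃ₗ[ℝ] (B → ℝ)) (w : W) {g : B → ℝ}
    (hg : g ∈ titsCone π) : π w g ∈ titsCone π := by
  obtain ⟨u, f, hf, rfl⟩ := Set.mem_iUnion.1 hg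
  exact Set.mem_iUnion.2 ⟨w * u, f, hf, by rw [map_mul]; rfl⟩

lemma map_mem_interior_titsCone (π : W →* (B → ℝ) ≃ₗ[ℝ] (B → ℝ)) (w : W) {g : B → ℝ}
    (hg : g ∈ interior (titsCone π)) : π w g ∈ interior (titsCone π) := by
  let h := (π w).toContinuousLinearEquiv.toHomeomorph
  have himage : h '' interior (titsCone π) = interior (h '' titsCone π) := h.image_interior _
  refine interior_mono ?_ (himage ▸ Set.mem_image_of_mem h hg)
  rintro _ ⟨f, hf, rfl⟩
  exact map_mem_titsCone π w hf

/-- An open neighbourhood of the relative interior of the wall `H_{α_i}` of `C̄`. -/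
def wallNbhd (i : B) : Set (B → ℝ) := {g | ∀ j, j ≠ i → 2 * |g i| < g j}

omit [DecidableEq B] in
lemma isOpen_wallNbhd (i : B) : IsOpen (wallNbhd i) := by
  simp only [wallNbhd, Set.ofPred_forall]
  exact isOpen_iInter_of_finite fun j => isOpen_iInter_of_finite fun _ =>
    isOpen_lt (continuous_const.mul (continuous_apply i).abs) (continuous_apply j)

lemma wallNbhd_subset_titsCone {M : CoxeterMatrix B} {cs : CoxeterSystem M W}
    {ρ π : W →* (B → ℝ) ≃ₗ[ℝ] (B → ℝ)} (hρ : IsGeomRep M cs ρ) (hπ : IsContraRep ρ π)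
    (i : B) : wallNbhd i ⊆ titsCone π := by
  intro g hg
  rcases le_or_gt 0 (g i) with hgi | hgi
  · refine Set.mem_iUnion.2 ⟨1, g, mem_closure_domCham_of_nonneg fun j => ?_, by simp⟩
    rcases eq_or_ne j i with rfl | hj
    · exact hgi
    · exact (mul_nonneg zero_le_two (abs_nonneg _)).trans (hg j hj).le
  · have hC : π (cs.simple i) g ∈ domCham B := by
      intro j
      rw [pair_sroot, contra_simple_apply hρ hπ]
      rcases eq_or_ne j i with rfl | hj
      · rw [cB_self]; linarith
      · have hcB : 2 * cB M i j * g i ≤ 2 * |g i| := by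
          calc 2 * cB M i j * g i ≤ 2 * (|cB M i j| * |g i|) := by
                rw [mul_assoc, ← abs_mul]; gcongr; exact le_abs_self _
            _ ≤ 2 * (1 * |g i|) := by gcongr; exact abs_cB_le_one M i j
            _ = 2 * |g i| := by ring
        linarith [hg j hj]
    have hg' : π (cs.simple i) (π (cs.simple i) g) = g := by
      rw [← LinearEquiv.mul_apply, ← map_mul, cs.simple_mul_simple_self, map_one]; rfl
    exact hg' ▸ Set.mem_iUnion.2 ⟨cs.simple i, _, subset_closure hC, rfl⟩

end TitsCone

/-- for every hyperplane `H ∈ 𝔓`, the intersection `H ∩ U°` is nonempty. -/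
theorem statement4 [Fintype B] [DecidableEq B] {M : CoxeterMatrix B}
    (cs : CoxeterSystem M W) (ρ π : W →* (B → ℝ) ≃ₗ[ℝ] (B → ℝ))
    (hρ : IsGeomRep M cs ρ) (hπ : IsContraRep ρ π) :
    ∀ H ∈ Planes ρ, (H ∩ interior (titsCone π)).Nonempty := by
  rintro H ⟨α, ⟨⟨w, i, rfl⟩, -⟩, rfl⟩
  let f : B → ℝ := fun j => if j = i then 0 else 1
  have hf : f ∈ wallNbhd i := fun j hj => by simp [f, hj]
  have hf_int : f ∈ interior (titsCone π) :=
    interior_maximal (wallNbhd_subset_titsCone hρ hπ i) (isOpen_wallNbhd i) hf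
  refine ⟨π w f, ?_, map_mem_interior_titsCone π w hf_int⟩
  change pair (π w f) (ρ w (sroot i)) = 0
  simp [hπ w f (sroot i), pair_sroot, f]

end PaperBound
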